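/- arXiv:2401.16793 — 9 statements merged into one kernel-verified Lean document; each statement's English description precedes it below -/
import Mathlib

section
/- Let f : ℝⁿ × ℝᵐ → ℝⁿ be (L_x,L_u)-Lipschitz, let {(x_j,u_j)}_{j=1}^N ⊆ ℝⁿ × ℝᵐ with ẋ_j := f(x_j,u_j), let π : ℝⁿ → ℝᵐ be a policy, and fix a state x ∈ ℝⁿ and a vector c ∈ ℝⁿ (the gradient of a Lyapunov function at x). Define the feasible set K := ⋂_{j=1}^N B̄(ẋ_j, r_j) with r_j := L_x‖x − x_j‖ + L_u‖π(x) − u_j‖. If ⟨c, v⟩ < 0 for every v ∈ K, then the true Lyapunov derivative satisfies ⟨c, f(x, π(x))⟩ < 0. -/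
open scoped RealInnerProductSpace

theorem eta_testing_stability_soundness {n m N : ℕ}
    (f : EuclideanSpace ℝ (Fin n) × EuclideanSpace ℝ (Fin m) → EuclideanSpace ℝ (Fin n))
    (Lx Lu : ℝ)
    (hfx : ∀ (u : EuclideanSpace ℝ (Fin m)) (x₁ x₂ : EuclideanSpace ℝ (Fin n)),
      ‖f (x₁, u) - f (x₂, u)‖ ≤ Lx * ‖x₁ - x₂‖)
    (hfu : ∀ (x : EuclideanSpace ℝ (Fin n)) (u₁ u₂ : EuclideanSpace ℝ (Fin m)),
      ‖f (x, u₁) - f (x, u₂)‖ ≤ Lu * ‖u₁ - u₂‖)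
    (xs : Fin N → EuclideanSpace ℝ (Fin n)) (us : Fin N → EuclideanSpace ℝ (Fin m))
    (π : EuclideanSpace ℝ (Fin n) → EuclideanSpace ℝ (Fin m))
    (x : EuclideanSpace ℝ (Fin n)) (c : EuclideanSpace ℝ (Fin n))
    (hneg : ∀ v ∈ ⋂ j : Fin N,
      Metric.closedBall (f (xs j, us j)) (Lx * ‖x - xs j‖ + Lu * ‖π x - us j‖),
      ⟪c, v⟫ < 0) :
    ⟪c, f (x, π x)⟫ < 0 := by
  apply hneg
  refine Set.mem_iInter.2 fun j => ?_
  rw [Metric.mem_closedBall, dist_eq_norm]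
  calc ‖f (x, π x) - f (xs j, us j)‖
      ≤ ‖f (x, π x) - f (xs j, π x)‖ + ‖f (xs j, π x) - f (xs j, us j)‖ := by
        simpa using norm_sub_le_norm_sub_add_norm_sub (f (x, π x)) (f (xs j, π x)) (f (xs j, us j))
    _ ≤ Lx * ‖x - xs j‖ + Lu * ‖π x - us j‖ := add_le_add (hfx _ _ _) (hfu _ _ _)
end

section
/- Let f : ℝⁿ × ℝᵐ → ℝⁿ be (L_x,L_u)-Lipschitz, let {(x_j,u_j)}_{j=1}^N ⊆ ℝⁿ × ℝᵐ with ẋ_j := f(x_j,u_j), let π : ℝⁿ → ℝᵐ be a policy, and fix a state x ∈ ℝⁿ and a vector c ∈ ℝⁿ. Define K := ⋂_{j=1}^N B̄(ẋ_j, r_j) with r_j := L_x‖x − x_j‖ + L_u‖π(x) − u_j‖. If ⟨c, v⟩ > 0 for every v ∈ K, then ⟨c, f(x, π(x))⟩ > 0. -/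
open scoped RealInnerProductSpace

theorem eta_testing_instability_soundness {n m N : ℕ}
    (f : EuclideanSpace ℝ (Fin n) × EuclideanSpace ℝ (Fin m) → EuclideanSpace ℝ (Fin n))
    (Lx Lu : ℝ)
    (hfx : ∀ (u : EuclideanSpace ℝ (Fin m)) (x₁ x₂ : EuclideanSpace ℝ (Fin n)),
      ‖f (x₁, u) - f (x₂, u)‖ ≤ Lx * ‖x₁ - x₂‖)
    (hfu : ∀ (x : EuclideanSpace ℝ (Fin n)) (u₁ u₂ : EuclideanSpace ℝ (Fin m)),
      ‖f (x, u₁) - f (x, u₂)‖ ≤ Lu * ‖u₁ - u₂‖)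
    (xs : Fin N → EuclideanSpace ℝ (Fin n)) (us : Fin N → EuclideanSpace ℝ (Fin m))
    (π : EuclideanSpace ℝ (Fin n) → EuclideanSpace ℝ (Fin m))
    (x : EuclideanSpace ℝ (Fin n)) (c : EuclideanSpace ℝ (Fin n))
    (hpos : ∀ v ∈ ⋂ j : Fin N,
      Metric.closedBall (f (xs j, us j)) (Lx * ‖x - xs j‖ + Lu * ‖π x - us j‖),
      ⟪c, v⟫ > 0) :
    ⟪c, f (x, π x)⟫ > 0 := by
  apply hpos
  simp only [Set.mem_iInter, Metric.mem_closedBall, dist_eq_norm]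
  intro j
  calc ‖f (x, π x) - f (xs j, us j)‖
      ≤ ‖f (x, π x) - f (xs j, π x)‖ + ‖f (xs j, π x) - f (xs j, us j)‖ :=
        norm_sub_le_norm_sub_add_norm_sub _ _ _
    _ ≤ Lx * ‖x - xs j‖ + Lu * ‖π x - us j‖ :=
        add_le_add (hfx _ _ _) (hfu _ _ _)
end

section
/- Let A be a real n×n matrix, B a real n×m matrix, X a real n×N matrix, U a real m×N matrix, and set Ẋ := A·X + B·U. Let Z be the (n+m)×N matrix obtained by stacking X on top of U, and suppose Z admits a right inverse Z⁺ (an N×(n+m) real matrix with Z·Z⁺ = I_{n+m}). Then the n×(n+m) block matrix [A B] (A in the first n columns, B in the last m columns) equals Ẋ·Z⁺. -/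
open Matrix

theorem data_based_representation {n m N : ℕ}
    (A : Matrix (Fin n) (Fin n) ℝ) (B : Matrix (Fin n) (Fin m) ℝ)
    (X : Matrix (Fin n) (Fin N) ℝ) (U : Matrix (Fin m) (Fin N) ℝ)
    (Zp : Matrix (Fin N) (Fin n ⊕ Fin m) ℝ)
    (hZ : Matrix.fromRows X U * Zp = 1) :
    Matrix.fromCols A B = (A * X + B * U) * Zp :=
  calc fromCols A B = fromCols A B * (fromRows X U * Zp) := by rw [hZ, Matrix.mul_one]
    _ = (A * X + B * U) * Zp := by rw [← Matrix.mul_assoc, fromCols_mul_fromRows]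
end

section
/- Let A be a real n×n matrix, B a real n×m matrix, X a real n×N matrix, U a real m×N matrix, and set Ẋ := A·X + B·U. Let Z be the (n+m)×N matrix obtained by stacking X on top of U, and suppose Z·Z⁺ = I_{n+m} for some N×(n+m) matrix Z⁺. Then for every real m×n feedback gain K, the closed-loop matrix satisfies A + B·K = Ẋ·Z⁺·S_K, where S_K is the (n+m)×n matrix obtained by stacking the identity I_n on top of K. -/
open Matrix

theorem data_based_closed_loop {n m N : ℕ}
    (A : Matrix (Fin n) (Fin n) ℝ) (B : Matrix (Fin n) (Fin m) ℝ)
    (X : Matrix (Fin n) (Fin N) ℝ) (U : Matrix (Fin m) (Fin N) ℝ)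
    (Zp : Matrix (Fin N) (Fin n ⊕ Fin m) ℝ)
    (hZ : Matrix.fromRows X U * Zp = 1) :
    ∀ K : Matrix (Fin m) (Fin n) ℝ,
      A + B * K = (A * X + B * U) * Zp * Matrix.fromRows (1 : Matrix (Fin n) (Fin n) ℝ) K := by
  intro K
  have h1 : A * X + B * U = Matrix.fromCols A B * Matrix.fromRows X U := by
    rw [fromCols_mul_fromRows]
  rw [h1, Matrix.mul_assoc (Matrix.fromCols A B), hZ, Matrix.mul_one, fromCols_mul_fromRows, Matrix.mul_one]
end

section
/- Let A be a real n×n matrix, B a real n×m matrix, X a real n×N matrix, U a real m×N matrix, Ẋ := A·X + B·U, and let Z be the (n+m)×N matrix stacking X on top of U with Z·Z⁺ = I_{n+m} for some N×(n+m) matrix Z⁺. Let K be a real m×n matrix, S_K the (n+m)×n matrix stacking I_n on top of K, and P a real n×n matrix. Then the data-based dissipation matrix P·(Ẋ·Z⁺·S_K) + (Ẋ·Z⁺·S_K)ᵀ·P equals the model-based dissipation matrix P·(A + B·K) + (A + B·K)ᵀ·P. -/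
open Matrix

theorem data_based_dissipation_matrix {n m N : ℕ}
    (A : Matrix (Fin n) (Fin n) ℝ) (B : Matrix (Fin n) (Fin m) ℝ)
    (X : Matrix (Fin n) (Fin N) ℝ) (U : Matrix (Fin m) (Fin N) ℝ)
    (Zp : Matrix (Fin N) (Fin n ⊕ Fin m) ℝ)
    (hZ : Matrix.fromRows X U * Zp = 1)
    (K : Matrix (Fin m) (Fin n) ℝ) (P : Matrix (Fin n) (Fin n) ℝ) :
    P * ((A * X + B * U) * Zp * Matrix.fromRows (1 : Matrix (Fin n) (Fin n) ℝ) K) +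
      ((A * X + B * U) * Zp * Matrix.fromRows (1 : Matrix (Fin n) (Fin n) ℝ) K)ᵀ * P =
    P * (A + B * K) + (A + B * K)ᵀ * P := by
  have h1 : A * X + B * U = Matrix.fromCols A B * Matrix.fromRows X U := by
    rw [Matrix.fromCols_mul_fromRows]
  have h2 : (A * X + B * U) * Zp * Matrix.fromRows (1 : Matrix (Fin n) (Fin n) ℝ) K
      = A + B * K := by
    rw [h1, Matrix.mul_assoc, Matrix.mul_assoc, ← Matrix.mul_assoc (Matrix.fromRows X U), hZ, Matrix.one_mul,
      Matrix.fromCols_mul_fromRows, Matrix.mul_one]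
  rw [h2]
end

section
/- Let M be a real n×n matrix and P a real symmetric positive definite n×n matrix such that the matrix P·M + Mᵀ·P is negative definite (i.e., vᵀ(PM + MᵀP)v < 0 for every nonzero v ∈ ℝⁿ). Then every complex eigenvalue of M has strictly negative real part. -/
open Matrix

theorem continuous_lyapunov_implies_hurwitz {n : ℕ}
    (M P : Matrix (Fin n) (Fin n) ℝ)
    (hPsymm : P = Pᵀ)
    (hPpos : ∀ v : Fin n → ℝ, v ≠ 0 → 0 < v ⬝ᵥ P.mulVec v)
    (hQneg : ∀ v : Fin n → ℝ, v ≠ 0 → v ⬝ᵥ (P * M + Mᵀ * P).mulVec v < 0) :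
    ∀ μ : ℂ, (M.map Complex.ofReal).charpoly.IsRoot μ → μ.re < 0 := by
  intro μ hroot
  set Mc := M.map Complex.ofReal with hMc
  -- eigenvector
  have hdet : (μ • (1 : Matrix (Fin n) (Fin n) ℂ) - Mc).det = 0 := by
    have := hroot
    rw [Polynomial.IsRoot, Matrix.charpoly, ← Polynomial.coe_evalRingHom,
      RingHom.map_det] at this
    convert this using 2
    ext i j
    by_cases h : i = j <;>
      simp [charmatrix_apply, Matrix.smul_apply, Matrix.one_apply, diagonal_apply, h]
  obtain ⟨z, hz, hzeq⟩ := (Matrix.exists_mulVec_eq_zero_iff).mpr hdet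
  have heig : Mc.mulVec z = μ • z := by
    have : (μ • (1 : Matrix (Fin n) (Fin n) ℂ)).mulVec z - Mc.mulVec z = 0 := by
      rw [← Matrix.sub_mulVec]; exact hzeq
    have h2 : (μ • (1 : Matrix (Fin n) (Fin n) ℂ)).mulVec z = μ • z := by
      simp [Matrix.smul_mulVec]
    rw [h2, sub_eq_zero] at this
    exact this.symm
  -- real and imaginary parts
  set x : Fin n → ℝ := fun i => (z i).re with hx
  set y : Fin n → ℝ := fun i => (z i).im with hy
  have key : ∀ (A : Matrix (Fin n) (Fin n) ℝ),
      (star z ⬝ᵥ (A.map Complex.ofReal).mulVec z).re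
        = x ⬝ᵥ A.mulVec x + y ⬝ᵥ A.mulVec y := by
    intro A
    simp only [dotProduct, mulVec, Pi.star_apply, map_apply, Finset.mul_sum,
      Complex.re_sum, Finset.sum_add_distrib.symm]
    refine Finset.sum_congr rfl fun i _ => Finset.sum_congr rfl fun j _ => ?_
    simp only [Complex.mul_re, Complex.mul_im, Complex.conj_re, Complex.conj_im,
      Complex.ofReal_re, Complex.ofReal_im, RCLike.star_def]
    ring
  have hxy : x ≠ 0 ∨ y ≠ 0 := by
    by_contra h
    push_neg at h
    apply hz
    funext i
    have h1 : x i = 0 := by rw [h.1]; rfl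
    have h2 : y i = 0 := by rw [h.2]; rfl
    exact Complex.ext h1 h2
  have hP0 : ∀ v : Fin n → ℝ, 0 ≤ v ⬝ᵥ P.mulVec v := by
    intro v; by_cases h : v = 0
    · simp [h]
    · exact le_of_lt (hPpos v h)
  have hQ0 : ∀ v : Fin n → ℝ, v ⬝ᵥ (P * M + Mᵀ * P).mulVec v ≤ 0 := by
    intro v; by_cases h : v = 0
    · simp [h]
    · exact le_of_lt (hQneg v h)
  set a : ℂ := star z ⬝ᵥ (P.map Complex.ofReal).mulVec z with ha
  have hapos : 0 < a.re := by
    rw [ha, key P]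
    rcases hxy with h | h
    · have := hPpos x h
      have := hP0 y
      linarith
    · have := hPpos y h
      have := hP0 x
      linarith
  have hqneg : (star z ⬝ᵥ (((P * M + Mᵀ * P)).map Complex.ofReal).mulVec z).re < 0 := by
    rw [key]
    rcases hxy with h | h
    · have := hQneg x h
      have := hQ0 y
      linarith
    · have := hQneg y h
      have := hQ0 x
      linarith
  -- algebraic identity
  have hmapmul : ∀ (A B : Matrix (Fin n) (Fin n) ℝ),
      (A * B).map Complex.ofReal = (A.map Complex.ofReal) * (B.map Complex.ofReal) := by
    intro A B
    ext i j
    simp [Matrix.mul_apply]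
  have hstarMc : Mc.mulVec (star z) = star (Mc.mulVec z) := by
    funext i
    simp only [mulVec, dotProduct, Pi.star_apply, hMc, map_apply, RCLike.star_def, map_sum]
    refine Finset.sum_congr rfl fun j _ => ?_
    simp [Complex.conj_ofReal]
  have hiden : star z ⬝ᵥ (((P * M + Mᵀ * P)).map Complex.ofReal).mulVec z
      = (μ + (starRingEnd ℂ) μ) * a := by
    have hmapadd : (P * M + Mᵀ * P).map Complex.ofReal
        = (P * M).map Complex.ofReal + (Mᵀ * P).map Complex.ofReal := by
      ext i j; simp
    rw [hmapadd, hmapmul, hmapmul, Matrix.add_mulVec, dotProduct_add]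
    have h1 : star z ⬝ᵥ ((P.map Complex.ofReal) * Mc).mulVec z = μ * a := by
      rw [← Matrix.mulVec_mulVec, heig, Matrix.mulVec_smul, dotProduct_smul, ha]
      rfl
    have h2 : star z ⬝ᵥ ((Mᵀ.map Complex.ofReal) * (P.map Complex.ofReal)).mulVec z
        = (starRingEnd ℂ) μ * a := by
      have hT : Mᵀ.map Complex.ofReal = Mcᵀ := by
        rw [hMc, Matrix.transpose_map]
      rw [hT, ← Matrix.mulVec_mulVec, Matrix.dotProduct_mulVec, Matrix.vecMul_transpose,
        hstarMc, heig]
      have : star (μ • z) = (starRingEnd ℂ) μ • star z := by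
        funext i; simp [mul_comm]
      rw [this, smul_dotProduct, ha, smul_eq_mul]
    rw [h1, h2]
    ring
  rw [hiden] at hqneg
  rw [Complex.add_conj] at hqneg
  have : ((2 * μ.re : ℝ) * a : ℂ).re = 2 * μ.re * a.re := by
    simp [Complex.mul_re]
  rw [this] at hqneg
  nlinarith
end

section
/- Let A be a real n×n matrix, B a real n×m matrix, X a real n×N matrix, U a real m×N matrix, X′ := A·X + B·U, and let Z be the (n+m)×N matrix stacking X on top of U with Z·Z⁺ = I_{n+m} for some N×(n+m) matrix Z⁺. Let K be a real m×n matrix, S_K the (n+m)×n matrix stacking I_n on top of K, and P a real n×n matrix. Then (X′·Z⁺·S_K)ᵀ·P·(X′·Z⁺·S_K) − P equals (A + B·K)ᵀ·P·(A + B·K) − P. -/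
open Matrix

theorem data_based_discrete_dissipation_matrix {n m N : ℕ}
    (A : Matrix (Fin n) (Fin n) ℝ) (B : Matrix (Fin n) (Fin m) ℝ)
    (X : Matrix (Fin n) (Fin N) ℝ) (U : Matrix (Fin m) (Fin N) ℝ)
    (Zp : Matrix (Fin N) (Fin n ⊕ Fin m) ℝ)
    (hZ : Matrix.fromRows X U * Zp = 1)
    (K : Matrix (Fin m) (Fin n) ℝ) (P : Matrix (Fin n) (Fin n) ℝ) :
    ((A * X + B * U) * Zp * Matrix.fromRows (1 : Matrix (Fin n) (Fin n) ℝ) K)ᵀ * P *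
        ((A * X + B * U) * Zp * Matrix.fromRows (1 : Matrix (Fin n) (Fin n) ℝ) K) - P =
      (A + B * K)ᵀ * P * (A + B * K) - P := by
  have h1 : (A * X + B * U) * Zp * Matrix.fromRows (1 : Matrix (Fin n) (Fin n) ℝ) K
      = A + B * K := by
    have h2 : A * X + B * U = Matrix.fromCols A B * Matrix.fromRows X U :=
      (Matrix.fromCols_mul_fromRows A B X U).symm
    rw [h2, Matrix.mul_assoc _ _ Zp, hZ, Matrix.mul_one,
      Matrix.fromCols_mul_fromRows, Matrix.mul_one]
  rw [h1]
end

section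
/- Let M be a real n×n matrix and P a real symmetric positive definite n×n matrix such that Mᵀ·P·M − P is negative definite. Then every complex eigenvalue of M has modulus strictly less than 1. -/
/-!
If `M v = μ v` with `v ≠ 0` complex, then `v* (MᵀPM - P) v = (|μ|² - 1) v* P v`. For a real
matrix `A` and `v = x + iy`, the real part of `v* A v` is `xᵀAx + yᵀAy`, so definiteness on real
vectors makes `Re (v* P v)` positive and `Re (v* (MᵀPM - P) v)` negative, forcing `|μ|² < 1`.
-/

open Matrix

namespace Matrix

variable {ι : Type*} [Fintype ι]

lemma exists_mulVec_eq_smul_of_isRoot_charpoly {K : Type*} [Field K] [DecidableEq ι]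
    {A : Matrix ι ι K} {μ : K} (h : A.charpoly.IsRoot μ) :
    ∃ v : ι → K, v ≠ 0 ∧ A *ᵥ v = μ • v := by
  rw [← charpoly_toLin', ← Module.End.hasEigenvalue_iff_isRoot_charpoly] at h
  obtain ⟨v, hv⟩ := h.exists_hasEigenvector
  exact ⟨v, hv.2, Module.End.mem_eigenspace_iff.mp hv.1⟩

lemma star_dotProduct_conjTranspose_mul_mul_mulVec_of_mulVec_eq_smul {R : Type*} [CommRing R]
    [StarRing R] (A B : Matrix ι ι R) {μ : R} {v : ι → R} (hv : A *ᵥ v = μ • v) :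
    star v ⬝ᵥ (Aᴴ * B * A) *ᵥ v = star μ * μ * (star v ⬝ᵥ B *ᵥ v) := by
  rw [← mulVec_mulVec, ← mulVec_mulVec, dotProduct_mulVec, ← star_mulVec, hv, star_smul,
    mulVec_smul, smul_dotProduct, dotProduct_smul, smul_eq_mul, smul_eq_mul, mul_assoc]

lemma re_star_dotProduct_map_ofReal_mulVec (A : Matrix ι ι ℝ) (v : ι → ℂ) :
    (star v ⬝ᵥ A.map Complex.ofReal *ᵥ v).re =
      (fun i => (v i).re) ⬝ᵥ A *ᵥ (fun i => (v i).re) +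
      (fun i => (v i).im) ⬝ᵥ A *ᵥ (fun i => (v i).im) := by
  simp only [dotProduct, mulVec, Pi.star_apply, map_apply, Finset.mul_sum, Complex.re_sum,
    ← Finset.sum_add_distrib]
  refine Finset.sum_congr rfl fun i _ => Finset.sum_congr rfl fun j _ => ?_
  simp [Complex.mul_re]

lemma re_star_dotProduct_map_ofReal_mulVec_pos {A : Matrix ι ι ℝ}
    (hA : ∀ x : ι → ℝ, x ≠ 0 → 0 < x ⬝ᵥ A *ᵥ x) {v : ι → ℂ} (hv : v ≠ 0) :
    0 < (star v ⬝ᵥ A.map Complex.ofReal *ᵥ v).re := by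
  rw [re_star_dotProduct_map_ofReal_mulVec]
  have hA_nonneg : ∀ x : ι → ℝ, 0 ≤ x ⬝ᵥ A *ᵥ x := fun x => by
    rcases eq_or_ne x 0 with rfl | hx
    · simp
    · exact (hA x hx).le
  by_cases hre : (fun i => (v i).re) = 0
  · have him : (fun i => (v i).im) ≠ 0 := fun him =>
      hv (funext fun i => Complex.ext (congrFun hre i) (congrFun him i))
    linarith [hA_nonneg (fun i => (v i).re), hA _ him]
  · linarith [hA_nonneg (fun i => (v i).im), hA _ hre]

end Matrix

theorem discrete_lyapunov_implies_schur_general {n : ℕ}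
    (M P : Matrix (Fin n) (Fin n) ℝ)
    (hPpos : ∀ v : Fin n → ℝ, v ≠ 0 → 0 < v ⬝ᵥ P.mulVec v)
    (hQneg : ∀ v : Fin n → ℝ, v ≠ 0 → v ⬝ᵥ (Mᵀ * P * M - P).mulVec v < 0) :
    ∀ μ : ℂ, (M.map Complex.ofReal).charpoly.IsRoot μ → ‖μ‖ < 1 := by
  intro μ hμ
  obtain ⟨v, hv0, hv⟩ := exists_mulVec_eq_smul_of_isRoot_charpoly hμ
  have hP := re_star_dotProduct_map_ofReal_mulVec_pos hPpos hv0
  have hQ := re_star_dotProduct_map_ofReal_mulVec_pos (A := P - Mᵀ * P * M)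
    (fun x hx => by have := hQneg x hx; rw [sub_mulVec, dotProduct_sub] at this ⊢; linarith) hv0
  have hmap : (P - Mᵀ * P * M).map Complex.ofReal = P.map Complex.ofReal -
      (M.map Complex.ofReal)ᴴ * P.map Complex.ofReal * M.map Complex.ofReal := by
    ext i j
    simp [mul_apply]
  rw [hmap, sub_mulVec, dotProduct_sub,
    star_dotProduct_conjTranspose_mul_mul_mulVec_of_mulVec_eq_smul _ _ hv, Complex.star_def,
    ← Complex.normSq_eq_conj_mul_self, Complex.sub_re, Complex.re_ofReal_mul] at hQ
  have hnormSq : Complex.normSq μ < 1 := by nlinarith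
  rwa [← sq_lt_one_iff₀ (norm_nonneg μ), Complex.sq_norm]

theorem discrete_lyapunov_implies_schur {n : ℕ}
    (M P : Matrix (Fin n) (Fin n) ℝ)
    (hPsymm : P = Pᵀ)
    (hPpos : ∀ v : Fin n → ℝ, v ≠ 0 → 0 < v ⬝ᵥ P.mulVec v)
    (hQneg : ∀ v : Fin n → ℝ, v ≠ 0 → v ⬝ᵥ (Mᵀ * P * M - P).mulVec v < 0) :
    ∀ μ : ℂ, (M.map Complex.ofReal).charpoly.IsRoot μ → ‖μ‖ < 1 :=
  discrete_lyapunov_implies_schur_general M P hPpos hQneg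
end

section
/- Let A be a real n×n matrix, B a real n×m matrix, X a real n×N matrix, U a real m×N matrix, and X′ := A·X + B·U. Let Q be a real N×n matrix such that the n×n matrix X·Q is invertible, and define the feedback gain K := U·Q·(X·Q)⁻¹. Then the closed-loop matrix satisfies A + B·K = X′·Q·(X·Q)⁻¹. -/
open Matrix

theorem closed_loop_parameterization {n m N : ℕ}
    (A : Matrix (Fin n) (Fin n) ℝ) (B : Matrix (Fin n) (Fin m) ℝ)
    (X : Matrix (Fin n) (Fin N) ℝ) (U : Matrix (Fin m) (Fin N) ℝ)
    (Q : Matrix (Fin N) (Fin n) ℝ) (hXQ : IsUnit (X * Q)) :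
    A + B * (U * Q * (X * Q)⁻¹) = (A * X + B * U) * Q * (X * Q)⁻¹ := by
  have h : (X * Q) * (X * Q)⁻¹ = 1 := Matrix.mul_nonsing_inv _ (Matrix.isUnit_iff_isUnit_det _ |>.mp hXQ)
  calc A + B * (U * Q * (X * Q)⁻¹)
      = A * ((X * Q) * (X * Q)⁻¹) + B * (U * Q * (X * Q)⁻¹) := by rw [h, Matrix.mul_one]
    _ = (A * X + B * U) * Q * (X * Q)⁻¹ := by simp only [Matrix.add_mul, Matrix.mul_assoc]
end
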